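/- Suppose f(x_c) > x_c and fᵏ(a) < x_c, fᵏ(b) < x_c for all k ≥ 1. Let y_k = max S^k be the rightmost critical point of fᵏ. Then for all k ≥ 2: y_k > y_{k-1}, fᵏ has a local maximum at y_k with (fᵏ)''(y_k) < 0, and fᵏ(y_k) = f(x_c) > x_c. -/

import Mathlib

/-!
Induction on `k`, with invariant: `f^[k] (ys k) = f x_c` and `f^[k]` is strictly decreasing on
`(ys k, b]`. Since `f^[k]` then runs from `f x_c > x_c` down to `f^[k] b < x_c` on `[ys k, b]`, it
crosses `x_c` at some `w`, which is a critical point of `f^[k+1] = f ∘ f^[k]` because `f' x_c = 0`.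
Right of `w` we have `a ≤ f^[k] < x_c`, where `f` increases, so `(f^[k+1])' < 0` there: hence
`ys (k+1) = w` and the invariant propagates. At `w` the chain rule gives
`(f^[k+1])'' w = f'' x_c * ((f^[k])' w) ^ 2 < 0`.
-/

open Set

theorem ContDiff.iterate {𝕜 E : Type*} [NontriviallyNormedField 𝕜] [NormedAddCommGroup E]
    [NormedSpace 𝕜 E] {n : WithTop ℕ∞} {f : E → E} (hf : ContDiff 𝕜 n f) (k : ℕ) :
    ContDiff 𝕜 n f^[k] := by
  induction k with
  | zero => exact contDiff_id
  | succ k ih => rw [Function.iterate_succ']; exact hf.comp ih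

section Deriv

variable {𝕜 : Type*} [NontriviallyNormedField 𝕜]

theorem deriv_iterate_succ {f : 𝕜 → 𝕜} (hf : Differentiable 𝕜 f) (k : ℕ) (x : 𝕜) :
    deriv f^[k + 1] x = deriv f (f^[k] x) * deriv f^[k] x := by
  rw [Function.iterate_succ']
  exact deriv_comp x (hf _) (hf.iterate k x)

theorem deriv_deriv_comp {g h : 𝕜 → 𝕜} (hg : ContDiff 𝕜 2 g) (hh : ContDiff 𝕜 2 h) (x : 𝕜) :
    deriv (deriv (g ∘ h)) x =
      deriv (deriv g) (h x) * deriv h x ^ 2 + deriv g (h x) * deriv (deriv h) x := by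
  have hg' := hg.differentiable two_ne_zero
  have hh' := hh.differentiable two_ne_zero
  have hchain : deriv (g ∘ h) = fun y => deriv g (h y) * deriv h y :=
    funext fun y => deriv_comp y (hg' _) (hh' y)
  have hchain' : deriv (fun y => deriv g (h y)) x = deriv (deriv g) (h x) * deriv h x :=
    deriv_comp x (hg.differentiable_deriv_two _) (hh' x)
  rw [hchain, deriv_fun_mul (c := fun y => deriv g (h y))
    ((hg.differentiable_deriv_two _).comp x (hh' x)) (hh.differentiable_deriv_two x), hchain']
  ring

end Deriv

theorem eq_of_deriv_eq_zero_of_unimodal {f : ℝ → ℝ} {a b c y : ℝ}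
    (hup : ∀ x ∈ Ico a c, 0 < deriv f x) (hdn : ∀ x ∈ Ioc c b, deriv f x < 0)
    (hy : y ∈ Icc a b) (hy0 : deriv f y = 0) : y = c := by
  rcases lt_trichotomy y c with h | h | h
  · exact absurd hy0 (hup y ⟨hy.1, h⟩).ne'
  · exact h
  · exact absurd hy0 (hdn y ⟨h, hy.2⟩).ne

theorem isGreatest_deriv_eq_zero_of_deriv_neg {g : ℝ → ℝ} {a b y : ℝ} (hy : y ∈ Icc a b)
    (hy0 : deriv g y = 0) (hneg : ∀ x ∈ Ioc y b, deriv g x < 0) :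
    IsGreatest {x ∈ Icc a b | deriv g x = 0} y :=
  ⟨⟨hy, hy0⟩, fun x ⟨hx, hx0⟩ => not_lt.1 fun hyx => (hneg x ⟨hyx, hx.2⟩).ne hx0⟩

theorem deriv_iterate_succ_neg_of_iterate_eq {f : ℝ → ℝ} {a b c y : ℝ} {k : ℕ}
    (hmap : MapsTo f (Icc a b) (Icc a b)) (hf : Differentiable ℝ f)
    (hup : ∀ x ∈ Ico a c, 0 < deriv f x) (ha : a ≤ y) (hval : f^[k] y = c)
    (hneg : ∀ x ∈ Ioc y b, deriv f^[k] x < 0) :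
    ∀ x ∈ Ioc y b, deriv f^[k + 1] x < 0 := by
  have hanti : StrictAntiOn f^[k] (Icc y b) :=
    strictAntiOn_of_deriv_neg (convex_Icc y b) (hf.iterate k).continuous.continuousOn
      (by rw [interior_Icc]; exact fun x hx => hneg x ⟨hx.1, hx.2.le⟩)
  intro x hx
  have hlt : f^[k] x < c :=
    hval ▸ hanti (left_mem_Icc.2 (hx.1.le.trans hx.2)) (Ioc_subset_Icc_self hx) hx.1
  have hge : a ≤ f^[k] x := (hmap.iterate k ⟨ha.trans hx.1.le, hx.2⟩).1
  rw [deriv_iterate_succ hf]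
  exact mul_neg_of_pos_of_neg (hup _ ⟨hge, hlt⟩) (hneg x hx)

theorem rightmost_crit_iterate_succ {f : ℝ → ℝ} {a b c y z : ℝ} {k : ℕ}
    (hmap : MapsTo f (Icc a b) (Icc a b)) (hf : Differentiable ℝ f)
    (hup : ∀ x ∈ Ico a c, 0 < deriv f x) (hfc : deriv f c = 0) (hc : c < f c)
    (hbk : f^[k] b < c) (hy : y ∈ Icc a b) (hval : f^[k] y = f c)
    (hneg : ∀ x ∈ Ioc y b, deriv f^[k] x < 0)
    (hz : IsGreatest {x ∈ Icc a b | deriv f^[k + 1] x = 0} z) :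
    y < z ∧ f^[k] z = c ∧ deriv f^[k] z < 0 ∧ ∀ x ∈ Ioc z b, deriv f^[k + 1] x < 0 := by
  obtain ⟨w, hw, hwc⟩ : c ∈ f^[k] '' Ioo y b :=
    intermediate_value_Ioo' hy.2 (hf.iterate k).continuous.continuousOn ⟨hbk, hval ▸ hc⟩
  have hwab : w ∈ Icc a b := ⟨hy.1.trans hw.1.le, hw.2.le⟩
  have hneg' := deriv_iterate_succ_neg_of_iterate_eq hmap hf hup hwab.1 hwc
    fun x hx => hneg x ⟨hw.1.trans hx.1, hx.2⟩
  have hw0 : deriv f^[k + 1] w = 0 := by rw [deriv_iterate_succ hf, hwc, hfc, zero_mul]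
  obtain rfl : z = w := hz.unique (isGreatest_deriv_eq_zero_of_deriv_neg hwab hw0 hneg')
  exact ⟨hw.1, hwc, hneg z ⟨hw.1, hw.2.le⟩, hneg'⟩

theorem rightmost_crit_point_positive_max_general
    (a b x_c : ℝ) (f : ℝ → ℝ)
    (hmap : Set.MapsTo f (Set.Icc a b) (Set.Icc a b))
    (hf : ContDiff ℝ 2 f)
    (h2 : deriv (deriv f) x_c < 0)
    (hup : ∀ x ∈ Set.Ico a x_c, 0 < deriv f x)
    (hdn : ∀ x ∈ Set.Ioc x_c b, deriv f x < 0)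
    (hc : f x_c > x_c)
    (hbd : ∀ k : ℕ, 1 ≤ k → f^[k] a < x_c ∧ f^[k] b < x_c)
    (ys : ℕ → ℝ)
    (hys : ∀ k : ℕ, 1 ≤ k →
      IsGreatest {x ∈ Icc a b | deriv (f^[k]) x = 0} (ys k)) :
    ∀ k : ℕ, 2 ≤ k →
      ys (k - 1) < ys k ∧ deriv (deriv (f^[k])) (ys k) < 0 ∧
      f^[k] (ys k) = f x_c ∧ f x_c > x_c := by
  have hfd : Differentiable ℝ f := hf.differentiable two_ne_zero
  have hy1 : ys 1 = x_c :=
    eq_of_deriv_eq_zero_of_unimodal hup hdn (hys 1 le_rfl).1.1 (hys 1 le_rfl).1.2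
  have hfc : deriv f x_c = 0 := hy1 ▸ (hys 1 le_rfl).1.2
  have step n := rightmost_crit_iterate_succ hmap hfd hup hfc hc (hbd (n + 1) n.succ_pos).2
    (y := ys (n + 1)) (hz := hys (n + 2) (by omega))
  have inv : ∀ n, ys (n + 1) ∈ Icc a b ∧ f^[n + 1] (ys (n + 1)) = f x_c ∧
      ∀ x ∈ Ioc (ys (n + 1)) b, deriv f^[n + 1] x < 0 := by
    intro n
    induction n with
    | zero => exact ⟨(hys 1 le_rfl).1.1, by rw [hy1]; rfl, hy1 ▸ hdn⟩
    | succ n ih =>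
      obtain ⟨-, hz, -, hneg⟩ := step n ih.1 ih.2.1 ih.2.2
      exact ⟨(hys (n + 2) (by omega)).1.1, by rw [Function.iterate_succ_apply', hz], hneg⟩
  intro k hk
  obtain ⟨n, rfl⟩ : ∃ n, k = n + 2 := ⟨k - 2, by omega⟩
  obtain ⟨hlt, hz, hdz, -⟩ := step n (inv n).1 (inv n).2.1 (inv n).2.2
  refine ⟨hlt, ?_, by rw [Function.iterate_succ_apply', hz], hc⟩
  rw [Function.iterate_succ', deriv_deriv_comp hf (hf.iterate _), hz, hfc, zero_mul, add_zero]
  exact mul_neg_of_neg_of_pos h2 (sq_pos_of_neg hdz)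

theorem rightmost_crit_point_positive_max
    (a b x_c : ℝ) (f : ℝ → ℝ) (hab : a < b)
    (hmap : Set.MapsTo f (Set.Icc a b) (Set.Icc a b))
    (hf : ContDiff ℝ 2 f)
    (hxc : x_c ∈ Set.Ioo a b)
    (h2 : deriv (deriv f) x_c < 0)
    (hup : ∀ x ∈ Set.Ico a x_c, 0 < deriv f x)
    (hdn : ∀ x ∈ Set.Ioc x_c b, deriv f x < 0)
    (hc : f x_c > x_c)
    (hbd : ∀ k : ℕ, 1 ≤ k → f^[k] a < x_c ∧ f^[k] b < x_c)
    (ys : ℕ → ℝ)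
    (hys : ∀ k : ℕ, 1 ≤ k →
      IsGreatest {x ∈ Icc a b | deriv (f^[k]) x = 0} (ys k)) :
    ∀ k : ℕ, 2 ≤ k →
      ys (k - 1) < ys k ∧ deriv (deriv (f^[k])) (ys k) < 0 ∧
      f^[k] (ys k) = f x_c ∧ f x_c > x_c :=
  rightmost_crit_point_positive_max_general a b x_c f hmap hf h2 hup hdn hc hbd ys hys
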